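/- arXiv:1604.04698 — 8 statements merged into one kernel-verified Lean document; each statement's English description precedes it below -/
import Mathlib

section
/- Let N ≥ 1 and let a₁, …, a_N be nonnegative real numbers satisfying the generalized triangle inequality aₙ ≤ ∑_{m ≠ n} a_m for every n. Then there exist real phases θ₁, …, θ_N such that ∑ₙ aₙ · exp(i θₙ) = 0. In particular, if ∑ₙ aₙ = 1 and aₙ ≤ 1/2 for all n, such closing phases exist. -/
/-!
Cut the sides, in their given order, at a weighted median `m`: the sides before `m`, the side
`m` itself and the sides after `m` form three blocks, each of total length at most half the
perimeter, so the three block lengths satisfy the triangle inequalities. A triangle with those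
side lengths closes (intermediate value theorem for the angle at one vertex), and giving every
side of a block the phase of its block closes the polygon.
-/

open Complex Finset

theorem exists_norm_add_mul_exp_eq {b c d : ℝ} (hb : 0 ≤ b) (hc : 0 ≤ c)
    (hd₁ : |b - c| ≤ d) (hd₂ : d ≤ b + c) :
    ∃ α : ℝ, ‖(b : ℂ) + c * exp (I * α)‖ = d := by
  have hcont : Continuous fun α : ℝ => ‖(b : ℂ) + c * exp (I * α)‖ := by fun_prop
  have h₀ : ‖(b : ℂ) + c * exp (I * (0 : ℝ))‖ = b + c := by
    rw [ofReal_zero, mul_zero, exp_zero, mul_one, ← ofReal_add, norm_real, Real.norm_eq_abs,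
      abs_of_nonneg (add_nonneg hb hc)]
  have hπ : ‖(b : ℂ) + c * exp (I * Real.pi)‖ = |b - c| := by
    rw [mul_comm I, exp_pi_mul_I, mul_neg_one, ← sub_eq_add_neg, ← ofReal_sub, norm_real,
      Real.norm_eq_abs]
  obtain ⟨α, -, hα⟩ := intermediate_value_uIcc hcont.continuousOn
    (show d ∈ Set.uIcc _ _ from h₀ ▸ hπ ▸ Set.mem_uIcc.2 (Or.inr ⟨hd₁, hd₂⟩))
  exact ⟨α, hα⟩

theorem exists_triangle_phases {b c d : ℝ} (hb : 0 ≤ b) (hc : 0 ≤ c)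
    (h₁ : b ≤ c + d) (h₂ : c ≤ b + d) (h₃ : d ≤ b + c) :
    ∃ α β : ℝ, (b : ℂ) + c * exp (I * α) + d * exp (I * β) = 0 := by
  obtain ⟨α, hα⟩ := exists_norm_add_mul_exp_eq hb hc
    (abs_sub_le_iff.2 ⟨by linarith, by linarith⟩) h₃
  set z := -((b : ℂ) + c * exp (I * α))
  refine ⟨α, z.arg, ?_⟩
  have hz : ‖z‖ = d := by rw [norm_neg, hα]
  rw [← hz, mul_comm I (z.arg : ℂ), norm_mul_exp_arg_mul_I]
  ring

section WeightedMedian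

variable {ι : Type*} [Fintype ι] [LinearOrder ι]

theorem sum_eq_sum_lt_add_add_sum_gt {M : Type*} [AddCommMonoid M] (f : ι → M) (m : ι) :
    ∑ n, f n = ∑ n with n < m, f n + f m + ∑ n with m < n, f n := by
  have h : univ.filter (fun n => ¬n < m) = insert m (univ.filter (m < ·)) := by
    ext n
    simp [le_iff_eq_or_lt, eq_comm]
  rw [← sum_filter_add_sum_filter_not univ (· < m), h, sum_insert (by simp), add_assoc]

theorem exists_weighted_median [Nonempty ι] {a : ι → ℝ} (ha : 0 ≤ ∑ n, a n) :
    ∃ m, 2 * ∑ n with n < m, a n ≤ ∑ n, a n ∧ 2 * ∑ n with m < n, a n ≤ ∑ n, a n := by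
  set S := ∑ n, a n
  set T := univ.filter fun m => S ≤ 2 * ∑ n with n ≤ m, a n
  have hT : T.Nonempty := by
    obtain ⟨top, htop⟩ := Finite.exists_max (id : ι → ι)
    refine ⟨top, mem_filter.2 ⟨mem_univ _, ?_⟩⟩
    rw [filter_true_of_mem (p := (· ≤ top)) fun n _ => htop n]
    linarith
  -- `m` is the first index at which the running sum reaches half the total.
  obtain ⟨m, hmT, hmin⟩ := exists_min_image T id hT
  refine ⟨m, ?_, ?_⟩
  · rcases (univ.filter (· < m)).eq_empty_or_nonempty with hempty | hne
    · rw [hempty, sum_empty]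
      linarith
    · set p := (univ.filter (· < m)).max' hne
      have hpm : p < m := (mem_filter.1 (max'_mem _ hne)).2
      have hlt_eq : univ.filter (· < m) = univ.filter (· ≤ p) := by
        ext n
        simp only [mem_filter, mem_univ, true_and]
        exact ⟨fun hn => le_max' _ n (mem_filter.2 ⟨mem_univ n, hn⟩), fun hn => hn.trans_lt hpm⟩
      have hpT : p ∉ T := fun hp => (hmin p hp).not_gt hpm
      simp only [T, mem_filter, mem_univ, true_and, not_le] at hpT
      rw [hlt_eq]
      linarith
  · have hsplit := sum_filter_add_sum_filter_not univ (· ≤ m) a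
    simp only [not_le] at hsplit
    have hmS := (mem_filter.1 hmT).2
    linarith

end WeightedMedian

theorem sum_ofReal_mul_exp_of_forall_eq {ι : Type*} (s : Finset ι) (a θ : ι → ℝ) {φ : ℝ}
    (hθ : ∀ n ∈ s, θ n = φ) :
    ∑ n ∈ s, (a n : ℂ) * exp (I * θ n) = (∑ n ∈ s, a n : ℝ) * exp (I * φ) := by
  push_cast
  rw [sum_mul]
  exact sum_congr rfl fun n hn => by rw [hθ n hn]

/-- If nonnegative side lengths satisfy the generalized triangle inequality, then
there exist phases closing them into a polygon: `∑ₙ aₙ exp(i θₙ) = 0`. -/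
theorem closing_phases_exist (N : ℕ) (hN : 1 ≤ N) (a : Fin N → ℝ)
    (ha : ∀ n, 0 ≤ a n)
    (htri : ∀ n : Fin N, a n ≤ ∑ m ∈ Finset.univ.erase n, a m) :
    ∃ θ : Fin N → ℝ, ∑ n, (a n : ℂ) * Complex.exp (Complex.I * (θ n : ℂ)) = 0 := by
  have : Nonempty (Fin N) := ⟨⟨0, hN⟩⟩
  have hhalf : ∀ n, 2 * a n ≤ ∑ m, a m := fun n => by
    have := htri n
    rw [sum_erase_eq_sub (mem_univ n)] at this
    linarith
  obtain ⟨m, hlt, hgt⟩ := exists_weighted_median (sum_nonneg fun n _ => ha n)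
  have hsplit := sum_eq_sum_lt_add_add_sum_gt a m
  obtain ⟨α, β, hclose⟩ := exists_triangle_phases (b := ∑ n with n < m, a n) (c := a m)
    (d := ∑ n with m < n, a n) (sum_nonneg fun n _ => ha n) (ha m)
    (by linarith [hhalf m]) (by linarith [hhalf m]) (by linarith [hhalf m])
  set θ : Fin N → ℝ := fun n => if n < m then 0 else if n = m then α else β
  have hθ_lt : ∀ n ∈ ({n | n < m} : Finset (Fin N)), θ n = 0 := fun n hn =>
    if_pos (mem_filter.1 hn).2
  have hθ_gt : ∀ n ∈ ({n | m < n} : Finset (Fin N)), θ n = β := fun n hn => by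
    have hmn := (mem_filter.1 hn).2
    simp only [θ, if_neg hmn.not_gt, if_neg hmn.ne']
  refine ⟨θ, ?_⟩
  rw [sum_eq_sum_lt_add_add_sum_gt, sum_ofReal_mul_exp_of_forall_eq _ _ _ hθ_lt,
    sum_ofReal_mul_exp_of_forall_eq _ _ _ hθ_gt, ← hclose]
  simp [θ]
end

section
/- Let X be a connected topological space, N ≥ 1, and let g₁, …, g_N : X → ℝ be continuous nonnegative functions with ∑ₙ gₙ(x)² = 1 for every x ∈ X. If each gₙ has a zero (for every n there exists x with gₙ(x) = 0), then there exists a point x_c ∈ X such that gₙ(x_c)² ≤ 1/2 for every n. (Nodes in all overlap amplitudes guarantee the amplitude condition for a dynamical quantum phase transition at some point of the Brillouin zone.) -/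
/-!
Suppose no point satisfies the amplitude condition. Then the open sets
`{x | 1/2 < g n x ^ 2}` cover `X`, and they are pairwise disjoint because the squares sum to `1`.
In a connected space such a cover is trivial, so one of these sets is all of `X`,
which is impossible since `g n` has a zero.
-/

open Set Function

theorem eq_of_half_lt_of_sum_le_one {ι : Type*} [Fintype ι] {a : ι → ℝ} (ha : ∀ i, 0 ≤ a i)
    (hsum : ∑ i, a i ≤ 1) {i j : ι} (hi : 1 / 2 < a i) (hj : 1 / 2 < a j) : i = j := by
  classical
  by_contra hne
  have hpair : a i + a j ≤ ∑ k, a k := by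
    rw [← Finset.sum_pair hne]
    exact Finset.sum_le_sum_of_subset_of_nonneg (Finset.subset_univ _) fun k _ _ => ha k
  linarith

theorem eq_univ_of_pairwise_disjoint_open_cover {X ι : Type*} [TopologicalSpace X]
    [PreconnectedSpace X] {U : ι → Set X} (hopen : ∀ i, IsOpen (U i))
    (hdisj : Pairwise (Disjoint on U)) (hcover : ⋃ i, U i = univ) {i : ι} (hne : (U i).Nonempty) :
    U i = univ := by
  have hcompl : (U i)ᶜ = ⋃ (j) (_ : j ≠ i), U j := by
    ext x
    obtain ⟨k, hk⟩ := mem_iUnion.mp (hcover ▸ mem_univ x)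
    simp only [mem_compl_iff, mem_iUnion, exists_prop]
    constructor
    · exact fun hx => ⟨k, fun hki => hx (hki ▸ hk), hk⟩
    · rintro ⟨j, hji, hj⟩ hx
      exact (hdisj hji).notMem_of_mem_left hj hx
  have hclosed : IsClosed (U i) := by
    rw [← isOpen_compl_iff, hcompl]
    exact isOpen_biUnion fun j _ => hopen j
  exact IsClopen.eq_univ ⟨hclosed, hopen i⟩ hne

theorem nodes_imply_amplitude_condition_general
    (X : Type*) [TopologicalSpace X] [ConnectedSpace X]
    (N : ℕ) (g : Fin N → X → ℝ)
    (hcont : ∀ n, Continuous (g n))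
    (hnorm : ∀ x, ∑ n, (g n x) ^ 2 = 1)
    (hnodes : ∀ n, ∃ x, g n x = 0) :
    ∃ xc : X, ∀ n, (g n xc) ^ 2 ≤ 1 / 2 := by
  by_contra! hlarge
  set U : Fin N → Set X := fun n => {x | 1 / 2 < g n x ^ 2}
  have hopen : ∀ n, IsOpen (U n) := fun n => isOpen_lt continuous_const ((hcont n).pow 2)
  have hdisj : Pairwise (Disjoint on U) := fun n m hnm =>
    Set.disjoint_left.mpr fun x hn hm =>
      hnm (eq_of_half_lt_of_sum_le_one (fun k => sq_nonneg (g k x)) (hnorm x).le hn hm)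
  have hcover : ⋃ n, U n = univ := eq_univ_of_forall fun x => mem_iUnion.mpr (hlarge x)
  obtain ⟨x₀⟩ : Nonempty X := inferInstance
  obtain ⟨n, hn⟩ := hlarge x₀
  obtain ⟨xn, hxn⟩ := hnodes n
  have hUn : U n = univ := eq_univ_of_pairwise_disjoint_open_cover hopen hdisj hcover ⟨x₀, hn⟩
  have hxn_mem : xn ∈ U n := hUn ▸ mem_univ xn
  norm_num [U, hxn] at hxn_mem

/-- Nodes in all overlap amplitudes guarantee the amplitude condition for a DQPT
at some point of the Brillouin zone. -/
theorem nodes_imply_amplitude_condition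
    (X : Type*) [TopologicalSpace X] [ConnectedSpace X]
    (N : ℕ) (hN : 1 ≤ N) (g : Fin N → X → ℝ)
    (hcont : ∀ n, Continuous (g n))
    (hnonneg : ∀ n x, 0 ≤ g n x)
    (hnorm : ∀ x, ∑ n, (g n x) ^ 2 = 1)
    (hnodes : ∀ n, ∃ x, g n x = 0) :
    ∃ xc : X, ∀ n, (g n xc) ^ 2 ≤ 1 / 2 :=
  nodes_imply_amplitude_condition_general X N g hcont hnorm hnodes
end

section
/- Let X be a connected topological space and N ≥ 1. Let φ₁, …, φ_N : X → ℂ^N be continuous maps such that for every x ∈ X the family (φ₁(x), …, φ_N(x)) is orthonormal (hence an orthonormal basis of ℂ^N), and let ψ : X → ℂ^N be continuous with ‖ψ(x)‖ = 1 for all x. If for every n there exists a point x ∈ X with ⟨φₙ(x), ψ(x)⟩ = 0 (every overlap has a node), then there exists x_c ∈ X such that |⟨φₙ(x_c), ψ(x_c)⟩|² ≤ 1/2 for all n. (If the overlap of the pre-quench band with every post-quench eigenstate has a node in the Brillouin zone, the DQPT amplitude condition is satisfied at some momentum.) -/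
/-! The regions `Uₙ = {x | |⟨φₙ(x), ψ(x)⟩|² > 1/2}` are open, and by Bessel's inequality
`|⟨φₙ, ψ⟩|² + |⟨φₘ, ψ⟩|² ≤ ‖ψ‖² = 1` they are pairwise disjoint. If the amplitude condition
failed everywhere they would cover the connected space `X`, so one of them would be all of `X`;
but `Uₙ` misses the node of the `n`-th overlap. -/

open Set Function

open scoped InnerProductSpace ComplexInnerProductSpace

theorem isClosed_of_pairwise_disjoint_isOpen_iUnion_eq_univ {α ι : Type*} [TopologicalSpace α]
    {s : ι → Set α} (h_disj : Pairwise (Disjoint on s)) (h_open : ∀ i, IsOpen (s i))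
    (h_Union : ⋃ i, s i = univ) (i : ι) : IsClosed (s i) := by
  rw [← isOpen_compl_iff, compl_eq_univ_sdiff, ← h_Union, iUnion_sdiff]
  refine isOpen_iUnion fun j ↦ ?_
  rcases eq_or_ne i j with rfl | h_ne
  · simp
  · simpa only [(h_disj h_ne.symm).sdiff_eq_left] using h_open j

theorem ConnectedSpace.exists_eq_univ_of_pairwise_disjoint_isOpen {α ι : Type*}
    [TopologicalSpace α] [ConnectedSpace α] {s : ι → Set α} (h_disj : Pairwise (Disjoint on s))
    (h_open : ∀ i, IsOpen (s i)) (h_Union : ⋃ i, s i = univ) : ∃ i, s i = univ := by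
  obtain ⟨x⟩ : Nonempty α := inferInstance
  obtain ⟨i, hi⟩ := iUnion_eq_univ_iff.mp h_Union x
  have h_clopen : IsClopen (s i) :=
    ⟨isClosed_of_pairwise_disjoint_isOpen_iUnion_eq_univ h_disj h_open h_Union i, h_open i⟩
  exact ⟨i, h_clopen.eq_univ ⟨x, hi⟩⟩

section Orthonormal

variable {𝕜 E ι : Type*} [RCLike 𝕜] [NormedAddCommGroup E] [InnerProductSpace 𝕜 E]
  {v : ι → E}

theorem Orthonormal.norm_inner_sq_add_norm_inner_sq_le (hv : Orthonormal 𝕜 v) {i j : ι}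
    (hij : i ≠ j) (x : E) : ‖⟪v i, x⟫_𝕜‖ ^ 2 + ‖⟪v j, x⟫_𝕜‖ ^ 2 ≤ ‖x‖ ^ 2 := by
  classical
  simpa only [Finset.sum_pair hij] using hv.sum_inner_products_le (s := {i, j}) x

theorem Orthonormal.eq_of_half_lt_norm_inner_sq (hv : Orthonormal 𝕜 v) {x : E} (hx : ‖x‖ ≤ 1)
    {i j : ι} (hi : 1 / 2 < ‖⟪v i, x⟫_𝕜‖ ^ 2) (hj : 1 / 2 < ‖⟪v j, x⟫_𝕜‖ ^ 2) : i = j := by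
  by_contra hij
  have := hv.norm_inner_sq_add_norm_inner_sq_le hij x
  nlinarith [norm_nonneg x]

end Orthonormal

theorem overlap_nodes_imply_amplitude_condition_general
    (X : Type*) [TopologicalSpace X] [ConnectedSpace X]
    (N : ℕ)
    (φ : Fin N → X → EuclideanSpace ℂ (Fin N))
    (hφcont : ∀ n, Continuous (φ n))
    (hON : ∀ x : X, Orthonormal ℂ (fun n => φ n x))
    (ψ : X → EuclideanSpace ℂ (Fin N))
    (hψcont : Continuous ψ)
    (hψnorm : ∀ x, ‖ψ x‖ = 1)
    (hnodes : ∀ n, ∃ x, ⟪φ n x, ψ x⟫ = 0) :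
    ∃ xc : X, ∀ n, ‖⟪φ n xc, ψ xc⟫‖ ^ 2 ≤ 1 / 2 := by
  by_contra! h_violated
  let U : Fin N → Set X := fun n ↦ {x | 1 / 2 < ‖⟪φ n x, ψ x⟫‖ ^ 2}
  have h_open (n : Fin N) : IsOpen (U n) :=
    isOpen_lt continuous_const (((hφcont n).inner hψcont).norm.pow 2)
  have h_disj : Pairwise (Disjoint on U) := fun n m hnm ↦
    disjoint_left.mpr fun x hn hm ↦ hnm ((hON x).eq_of_half_lt_norm_inner_sq (hψnorm x).le hn hm)
  have h_cover : ⋃ n, U n = univ := iUnion_eq_univ_iff.mpr h_violated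
  obtain ⟨n, hn⟩ := ConnectedSpace.exists_eq_univ_of_pairwise_disjoint_isOpen h_disj h_open h_cover
  obtain ⟨x, hx⟩ := hnodes n
  have hxU : x ∈ U n := hn ▸ mem_univ x
  norm_num [U, hx] at hxU

open scoped ComplexInnerProductSpace in
/-- If the overlap of the pre-quench band with every post-quench eigenstate has a
node in the Brillouin zone, the DQPT amplitude condition holds at some momentum. -/
theorem overlap_nodes_imply_amplitude_condition
    (X : Type*) [TopologicalSpace X] [ConnectedSpace X]
    (N : ℕ) (hN : 1 ≤ N)
    (φ : Fin N → X → EuclideanSpace ℂ (Fin N))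
    (hφcont : ∀ n, Continuous (φ n))
    (hON : ∀ x : X, Orthonormal ℂ (fun n => φ n x))
    (ψ : X → EuclideanSpace ℂ (Fin N))
    (hψcont : Continuous ψ)
    (hψnorm : ∀ x, ‖ψ x‖ = 1)
    (hnodes : ∀ n, ∃ x, ⟪φ n x, ψ x⟫ = 0) :
    ∃ xc : X, ∀ n, ‖⟪φ n xc, ψ xc⟫‖ ^ 2 ≤ 1 / 2 :=
  overlap_nodes_imply_amplitude_condition_general X N φ hφcont hON ψ hψcont hψnorm hnodes
end

section
/- Let X be a connected topological space, N ≥ 1, and let g₁, …, g_N : X → ℝ be continuous functions. Suppose there is a point x₀ ∈ X and an index n₁ such that g_{n₁}(x₀) > g_m(x₀) for all m ≠ n₁ (n₁ is the unique strict maximizer at x₀), and a point x₁ ∈ X and index m with g_m(x₁) > g_{n₁}(x₁) (n₁ is not maximal at x₁). Then there exists a point x_c ∈ X and two distinct indices i ≠ j such that g_i(x_c) = g_j(x_c) and g_i(x_c) ≥ g_n(x_c) for all n (the top two ranks switch at x_c: the maximum is attained by at least two indices). -/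
/-!
Compare `g n₁` with the pointwise maximum `M` of the other functions. `M` is continuous, lies
below `g n₁` at `x₀` and above it at `x₁`, so on the connected space the two graphs cross; at a
crossing point `g n₁` ties with the other index realising `M` and both attain the overall maximum.
-/

open Finset

lemma exists_ne_eq_and_forall_le_of_sup'_erase_eq {ι α : Type*} [Fintype ι] [DecidableEq ι]
    [LinearOrder α] {a : ι → α} {i : ι} (hs : (univ.erase i).Nonempty)
    (hsup : (univ.erase i).sup' hs a = a i) :
    ∃ k, k ≠ i ∧ a k = a i ∧ ∀ n, a n ≤ a i := by
  obtain ⟨k, hk, hak⟩ := exists_mem_eq_sup' hs a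
  refine ⟨k, ne_of_mem_erase hk, hak ▸ hsup, fun n => ?_⟩
  rcases eq_or_ne n i with rfl | hn
  · exact le_rfl
  · exact hsup ▸ le_sup' a (mem_erase.mpr ⟨hn, mem_univ n⟩)

theorem exists_tie_for_max_of_le_of_lt {X ι α : Type*} [TopologicalSpace X]
    [PreconnectedSpace X] [Fintype ι] [DecidableEq ι] [LinearOrder α] [TopologicalSpace α]
    [OrderClosedTopology α] {g : ι → X → α} (hg : ∀ k, Continuous (g k)) {x₀ x₁ : X} {i j : ι}
    (h₀ : ∀ k ≠ i, g k x₀ ≤ g i x₀) (h₁ : g i x₁ < g j x₁) :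
    ∃ x k, k ≠ i ∧ g k x = g i x ∧ ∀ n, g n x ≤ g i x := by
  have hj : j ∈ univ.erase i := mem_erase.mpr ⟨fun hji => (hji ▸ h₁).false, mem_univ j⟩
  have hs : (univ.erase i).Nonempty := ⟨j, hj⟩
  have hM : Continuous fun x => (univ.erase i).sup' hs (g · x) :=
    Continuous.finset_sup'_apply hs fun k _ => hg k
  have hM₀ : (univ.erase i).sup' hs (g · x₀) ≤ g i x₀ :=
    sup'_le hs _ fun k hk => h₀ k (ne_of_mem_erase hk)
  have hM₁ : g i x₁ ≤ (univ.erase i).sup' hs (g · x₁) :=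
    h₁.le.trans (le_sup' (g · x₁) hj)
  obtain ⟨x, hx⟩ := intermediate_value_univ₂ hM (hg i) hM₀ hM₁
  exact ⟨x, exists_ne_eq_and_forall_le_of_sup'_erase_eq hs hx⟩

theorem rank_switch_exists_general
    (X : Type*) [TopologicalSpace X] [ConnectedSpace X]
    (N : ℕ) (g : Fin N → X → ℝ)
    (hcont : ∀ n, Continuous (g n))
    (x₀ : X) (n₁ : Fin N) (hmax : ∀ m ≠ n₁, g m x₀ < g n₁ x₀)
    (x₁ : X) (m : Fin N) (hswitch : g n₁ x₁ < g m x₁) :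
    ∃ (xc : X) (i j : Fin N), i ≠ j ∧ g i xc = g j xc ∧ ∀ n, g n xc ≤ g i xc := by
  obtain ⟨xc, k, hk, hgk, htop⟩ :=
    exists_tie_for_max_of_le_of_lt hcont (fun k hk => (hmax k hk).le) hswitch
  exact ⟨xc, n₁, k, hk.symm, hgk.symm, htop⟩

/-- If an index is the unique strict maximizer at one point but fails to be maximal
at another, then somewhere the top two ranks switch: the maximum is attained by at
least two distinct indices. -/
theorem rank_switch_exists
    (X : Type*) [TopologicalSpace X] [ConnectedSpace X]
    (N : ℕ) (hN : 1 ≤ N) (g : Fin N → X → ℝ)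
    (hcont : ∀ n, Continuous (g n))
    (x₀ : X) (n₁ : Fin N) (hmax : ∀ m ≠ n₁, g m x₀ < g n₁ x₀)
    (x₁ : X) (m : Fin N) (hswitch : g n₁ x₁ < g m x₁) :
    ∃ (xc : X) (i j : Fin N), i ≠ j ∧ g i xc = g j xc ∧ ∀ n, g n xc ≤ g i xc :=
  rank_switch_exists_general X N g hcont x₀ n₁ hmax x₁ m hswitch
end

section
/- Let n ≥ 1 and let ψ, φ : ℝ → ℝⁿ be continuous maps with ‖ψ(k)‖ = 1 and ‖φ(k)‖ = 1 for all k, such that ψ(k + 2π) = ψ(k) for all k (periodic lift, Berry phase 0) and φ(k + 2π) = −φ(k) for all k (antiperiodic lift, Berry phase π). Then there exists k ∈ [0, 2π] with ⟨φ(k), ψ(k)⟩ = 0. (The overlap of two real Bloch bands with different quantized Berry phases must have at least one node; second part of Theorem 2.) -/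
open Set

theorem exists_mem_Icc_eq_zero_of_map_eq_neg {α δ : Type*} [ConditionallyCompleteLinearOrder α]
    [TopologicalSpace α] [OrderTopology α] [DenselyOrdered α] [AddCommGroup δ] [LinearOrder δ]
    [IsOrderedAddMonoid δ] [TopologicalSpace δ] [OrderClosedTopology δ] {f : α → δ} {a b : α}
    (hab : a ≤ b) (hf : ContinuousOn f (Icc a b)) (hfab : f b = -f a) :
    ∃ c ∈ Icc a b, f c = 0 := by
  have hzero : (0 : δ) ∈ uIcc (f a) (f b) := by
    rw [hfab]
    rcases le_total (f a) 0 with h | h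
    · exact mem_uIcc.2 (Or.inl ⟨h, neg_nonneg.2 h⟩)
    · exact mem_uIcc.2 (Or.inr ⟨neg_nonpos.2 h, h⟩)
  rw [← uIcc_of_le hab] at hf ⊢
  exact intermediate_value_uIcc hf hzero

open scoped RealInnerProductSpace in
theorem Function.Antiperiodic.exists_inner_eq_zero_of_periodic {E : Type*}
    [NormedAddCommGroup E] [InnerProductSpace ℝ E] {φ ψ : ℝ → E} {T : ℝ} (hT : 0 ≤ T)
    (hφ : Function.Antiperiodic φ T) (hψ : Function.Periodic ψ T)
    (hφcont : Continuous φ) (hψcont : Continuous ψ) :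
    ∃ k ∈ Icc 0 T, ⟪φ k, ψ k⟫ = 0 := by
  refine exists_mem_Icc_eq_zero_of_map_eq_neg hT (hφcont.inner hψcont).continuousOn ?_
  have hφT : φ T = -φ 0 := by simpa only [zero_add] using hφ 0
  have hψT : ψ T = ψ 0 := by simpa only [zero_add] using hψ 0
  rw [hφT, hψT, inner_neg_left]

open scoped RealInnerProductSpace in
theorem berry_phase_mismatch_forces_node_general
    (n : ℕ)
    (ψ φ : ℝ → EuclideanSpace ℝ (Fin n))
    (hψcont : Continuous ψ) (hφcont : Continuous φ)
    (hψper : ∀ k, ψ (k + 2 * Real.pi) = ψ k)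
    (hφper : ∀ k, φ (k + 2 * Real.pi) = -φ k) :
    ∃ k ∈ Set.Icc (0 : ℝ) (2 * Real.pi), ⟪φ k, ψ k⟫ = 0 :=
  Function.Antiperiodic.exists_inner_eq_zero_of_periodic Real.two_pi_pos.le hφper hψper
    hφcont hψcont

open scoped RealInnerProductSpace in
/-- The overlap of two real Bloch bands with different quantized Berry phases
(periodic vs antiperiodic continuous unit lifts) must have a node. -/
theorem berry_phase_mismatch_forces_node
    (n : ℕ) (hn : 1 ≤ n)
    (ψ φ : ℝ → EuclideanSpace ℝ (Fin n))
    (hψcont : Continuous ψ) (hφcont : Continuous φ)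
    (hψnorm : ∀ k, ‖ψ k‖ = 1) (hφnorm : ∀ k, ‖φ k‖ = 1)
    (hψper : ∀ k, ψ (k + 2 * Real.pi) = ψ k)
    (hφper : ∀ k, φ (k + 2 * Real.pi) = -φ k) :
    ∃ k ∈ Set.Icc (0 : ℝ) (2 * Real.pi), ⟪φ k, ψ k⟫ = 0 :=
  berry_phase_mismatch_forces_node_general n ψ φ hψcont hφcont hψper hφper
end

section
/- Let n ≥ 1, let ε, ε′ ∈ {+1, −1}, and let ψ, φ : ℝ → ℝⁿ be continuous maps with ‖ψ(k)‖ = 1 and ‖φ(k)‖ = 1 for all k, satisfying ψ(k + 2π) = ε · ψ(k) and φ(k + 2π) = ε′ · φ(k) for all k. If ⟨φ(k), ψ(k)⟩ ≠ 0 for every k ∈ ℝ, then ε = ε′. (If the overlap of two real Bloch bands has no node, their quantized Berry phases coincide.) -/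
/-!
The overlap `k ↦ ⟪φ k, ψ k⟫` is continuous and nowhere zero, so by the intermediate value
theorem it has constant sign; over one period it is multiplied by `ε * ε'`, which is therefore
positive.
-/

theorem Continuous.mul_apply_pos_of_forall_ne_zero {X : Type*} [TopologicalSpace X]
    [PreconnectedSpace X] {f : X → ℝ} (hf : Continuous f) (hf0 : ∀ x, f x ≠ 0) (a b : X) :
    0 < f a * f b := by
  by_contra! hab
  have hzero : (0 : ℝ) ∈ Set.range f := by
    rcases mul_nonpos_iff.mp hab with ⟨ha, hb⟩ | ⟨ha, hb⟩
    · exact intermediate_value_univ b a hf ⟨hb, ha⟩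
    · exact intermediate_value_univ a b hf ⟨ha, hb⟩
  obtain ⟨x, hx⟩ := hzero
  exact hf0 x hx

open scoped RealInnerProductSpace in
theorem inner_apply_add_of_apply_add_eq_smul {E : Type*} [NormedAddCommGroup E]
    [InnerProductSpace ℝ E] {ψ φ : ℝ → E} {T ε ε' : ℝ}
    (hψ : ∀ k, ψ (k + T) = ε • ψ k) (hφ : ∀ k, φ (k + T) = ε' • φ k) (k : ℝ) :
    ⟪φ (k + T), ψ (k + T)⟫ = (ε * ε') * ⟪φ k, ψ k⟫ := by
  rw [hψ, hφ, real_inner_smul_left, real_inner_smul_right]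
  ring

open scoped RealInnerProductSpace in
theorem nodeless_overlap_equal_berry_phase_general
    (n : ℕ) (ε ε' : ℝ)
    (hε : ε = 1 ∨ ε = -1) (hε' : ε' = 1 ∨ ε' = -1)
    (ψ φ : ℝ → EuclideanSpace ℝ (Fin n))
    (hψcont : Continuous ψ) (hφcont : Continuous φ)
    (hψper : ∀ k, ψ (k + 2 * Real.pi) = ε • ψ k)
    (hφper : ∀ k, φ (k + 2 * Real.pi) = ε' • φ k)
    (hnodeless : ∀ k : ℝ, ⟪φ k, ψ k⟫ ≠ 0) :
    ε = ε' := by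
  set f : ℝ → ℝ := fun k => ⟪φ k, ψ k⟫
  have hsign : 0 < f 0 * f (0 + 2 * Real.pi) :=
    (hφcont.inner hψcont).mul_apply_pos_of_forall_ne_zero hnodeless _ _
  have hmonodromy : f (0 + 2 * Real.pi) = (ε * ε') * f 0 :=
    inner_apply_add_of_apply_add_eq_smul hψper hφper 0
  have hεε' : 0 < ε * ε' := by
    rw [hmonodromy, mul_left_comm] at hsign
    exact pos_of_mul_pos_left hsign (mul_self_nonneg _)
  rcases hε with rfl | rfl <;> rcases hε' with rfl | rfl <;> linarith

open scoped RealInnerProductSpace in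
/-- If the overlap of two real Bloch bands has no node, their quantized Berry
phases (monodromy signs of continuous unit lifts) coincide. -/
theorem nodeless_overlap_equal_berry_phase
    (n : ℕ) (hn : 1 ≤ n) (ε ε' : ℝ)
    (hε : ε = 1 ∨ ε = -1) (hε' : ε' = 1 ∨ ε' = -1)
    (ψ φ : ℝ → EuclideanSpace ℝ (Fin n))
    (hψcont : Continuous ψ) (hφcont : Continuous φ)
    (hψnorm : ∀ k, ‖ψ k‖ = 1) (hφnorm : ∀ k, ‖φ k‖ = 1)
    (hψper : ∀ k, ψ (k + 2 * Real.pi) = ε • ψ k)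
    (hφper : ∀ k, φ (k + 2 * Real.pi) = ε' • φ k)
    (hnodeless : ∀ k : ℝ, ⟪φ k, ψ k⟫ ≠ 0) :
    ε = ε' :=
  nodeless_overlap_equal_berry_phase_general n ε ε' hε hε' ψ φ hψcont hφcont hψper hφper hnodeless
end

section
/- Let X be a topological space, n ≥ 1, and let ψ, φ : X → ℂⁿ be continuous maps with ψ(x) ≠ 0 and φ(x) ≠ 0 for all x, such that the overlap ⟨φ(x), ψ(x)⟩ ≠ 0 for every x ∈ X. Then ψ is homotopic to a scalar multiple of φ through nowhere-vanishing maps: there exist a continuous map c : X → ℂ with c(x) ≠ 0 for all x, and a continuous map H : X × [0,1] → ℂⁿ with H(x, 0) = ψ(x), H(x, 1) = c(x) · φ(x), and H(x, s) ≠ 0 for all x ∈ X and s ∈ [0,1]. (A nodeless overlap forces the two families of complex lines to be homotopic, which is the topological core of Theorem 1: no node implies equal Chern numbers.) -/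
/-!
Rescale `φ x` by the gauge `c x = ⟪φ x, ψ x⟫ / ⟪φ x, φ x⟫`, chosen so that `⟪φ x, c x • φ x⟫ = ⟪φ x, ψ x⟫`,
and join `ψ` to `c • φ` by the straight-line homotopy. Since `⟪φ x, ·⟫` is linear, it is constant
along the segment, equal to the nonzero overlap, so the homotopy never vanishes.
-/

open scoped InnerProductSpace

section

variable {𝕜 E : Type*} [RCLike 𝕜] [NormedAddCommGroup E] [InnerProductSpace 𝕜 E]

theorem inner_lineMap_of_inner_eq {w u v : E} (h : ⟪w, u⟫_𝕜 = ⟪w, v⟫_𝕜) (t : 𝕜) :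
    ⟪w, AffineMap.lineMap u v t⟫_𝕜 = ⟪w, u⟫_𝕜 := by
  rw [AffineMap.lineMap_apply_module, inner_add_right, inner_smul_right, inner_smul_right, ← h]
  ring

theorem lineMap_ne_zero_of_inner_eq {w u v : E} (h : ⟪w, u⟫_𝕜 = ⟪w, v⟫_𝕜) (hu : ⟪w, u⟫_𝕜 ≠ 0)
    (t : 𝕜) : AffineMap.lineMap u v t ≠ 0 := fun h0 ↦
  hu <| by rw [← inner_lineMap_of_inner_eq h t, h0, inner_zero_right]

theorem inner_div_inner_self_smul {w : E} (hw : w ≠ 0) (v : E) :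
    ⟪w, (⟪w, v⟫_𝕜 / ⟪w, w⟫_𝕜) • w⟫_𝕜 = ⟪w, v⟫_𝕜 := by
  rw [inner_smul_right, div_mul_cancel₀ _ (inner_self_ne_zero.2 hw)]

end

open scoped ComplexInnerProductSpace unitInterval in
theorem nodeless_overlap_homotopic_general
    (X : Type*) [TopologicalSpace X]
    (n : ℕ)
    (ψ φ : X → EuclideanSpace ℂ (Fin n))
    (hψcont : Continuous ψ) (hφcont : Continuous φ)
    (hoverlap : ∀ x : X, ⟪φ x, ψ x⟫ ≠ 0) :
    ∃ (c : X → ℂ) (H : X × I → EuclideanSpace ℂ (Fin n)),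
      Continuous c ∧ (∀ x, c x ≠ 0) ∧ Continuous H ∧
      (∀ x, H (x, 0) = ψ x) ∧ (∀ x, H (x, 1) = c x • φ x) ∧
      (∀ x s, H (x, s) ≠ 0) := by
  have hφne x : φ x ≠ 0 := fun h ↦ hoverlap x (by rw [h, inner_zero_left])
  have hφφ x : ⟪φ x, φ x⟫ ≠ 0 := inner_self_ne_zero.2 (hφne x)
  let c x := ⟪φ x, ψ x⟫ / ⟪φ x, φ x⟫
  have hc : Continuous c := (hφcont.inner hψcont).div (hφcont.inner hφcont) hφφ
  have hgauge x : ⟪φ x, ψ x⟫ = ⟪φ x, c x • φ x⟫ := (inner_div_inner_self_smul (hφne x) _).symm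
  refine ⟨c, fun p ↦ AffineMap.lineMap (ψ p.1) (c p.1 • φ p.1) ((p.2 : ℝ) : ℂ), hc,
    fun x ↦ div_ne_zero (hoverlap x) (hφφ x), by fun_prop, fun x ↦ by simp, fun x ↦ by simp,
    fun x s ↦ lineMap_ne_zero_of_inner_eq (hgauge x) (hoverlap x) _⟩

open scoped ComplexInnerProductSpace unitInterval in
/-- A nodeless overlap forces the two families of nonzero state vectors to be
homotopic through nowhere-vanishing maps, up to a nowhere-vanishing scalar gauge. -/
theorem nodeless_overlap_homotopic
    (X : Type*) [TopologicalSpace X]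
    (n : ℕ) (hn : 1 ≤ n)
    (ψ φ : X → EuclideanSpace ℂ (Fin n))
    (hψcont : Continuous ψ) (hφcont : Continuous φ)
    (hψne : ∀ x, ψ x ≠ 0) (hφne : ∀ x, φ x ≠ 0)
    (hoverlap : ∀ x : X, ⟪φ x, ψ x⟫ ≠ 0) :
    ∃ (c : X → ℂ) (H : X × I → EuclideanSpace ℂ (Fin n)),
      Continuous c ∧ (∀ x, c x ≠ 0) ∧ Continuous H ∧
      (∀ x, H (x, 0) = ψ x) ∧ (∀ x, H (x, 1) = c x • φ x) ∧
      (∀ x s, H (x, s) ≠ 0) :=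
  nodeless_overlap_homotopic_general X n ψ φ hψcont hφcont hoverlap
end

section
/- Let N ≥ 2, let a₁, …, a_N be nonnegative real numbers with ∑ₙ aₙ = 1 and aₙ ≤ 1/2 for all n, and let E₁, …, E_N be real numbers such that the gaps E₂ − E₁, E₃ − E₁, …, E_N − E₁ are linearly independent over ℚ. Then the return amplitude G(t) = ∑ₙ aₙ · exp(−i Eₙ t) comes arbitrarily close to zero: for every ε > 0 there exists t ∈ ℝ with |∑ₙ aₙ · exp(−i Eₙ t)| < ε. (The amplitude condition together with phase ergodicity drives the Loschmidt amplitude to zero.) -/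
/-!
Since every weight is at most `1 / 2`, the weights split into three blocks of total weight at
most `1 / 2` each; these three lengths close up a triangle, which gives unit complex numbers
`Wₙ` with `∑ aₙ Wₙ = 0`. By Kronecker's theorem, the rational independence of the gaps gives a
time at which every phase `exp (i (Eₙ - E₀) t)` is within `ε` of `Wₙ / W₀`, so that, up to a
common unit factor, the amplitude is within `ε` of `∑ aₙ Wₙ = 0`.

Kronecker's theorem follows from Bohr's averaging argument:
`Q t = ∏ₖ ((1 + z̄ₖ exp (i ωₖ t)) / 2) ^ m` is a trigonometric polynomial whose frequencies
`∑ₖ fₖ ωₖ` are pairwise distinct, so the time average of `‖Q‖²` is the sum of the squared moduli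
of its coefficients, at least `(m + 1) ^ (-K)`. For large `m` this exceeds `θ ^ m`, and
`‖Q t‖² > θ ^ m` forces every factor to have squared modulus above `θ`, i.e. `exp (i ωₖ t)` to be
close to `zₖ`.
-/

open Complex ComplexConjugate Finset Filter

theorem exists_norm_eq_one_add_mul_add_mul_eq_zero {u v w : ℝ} (h₁ : |u - v| ≤ w)
    (h₂ : w ≤ |u + v|) : ∃ y z : ℂ, ‖y‖ = 1 ∧ ‖z‖ = 1 ∧ u + v * y + w * z = 0 := by
  obtain ⟨φ, -, hφ⟩ : w ∈ (fun φ : ℝ => ‖(u : ℂ) + v * cexp (φ * I)‖) '' Set.Icc 0 Real.pi :=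
    intermediate_value_Icc' Real.pi_pos.le (by fun_prop)
      ⟨by rwa [exp_pi_mul_I, mul_neg_one, ← sub_eq_add_neg, ← ofReal_sub, norm_real],
        by rwa [ofReal_zero, zero_mul, exp_zero, mul_one, ← ofReal_add, norm_real]⟩
  set x : ℂ := u + v * cexp (φ * I)
  refine ⟨cexp (φ * I), -cexp (x.arg * I), norm_exp_ofReal_mul_I φ,
    by rw [norm_neg, norm_exp_ofReal_mul_I], ?_⟩
  rw [← hφ]
  linear_combination -norm_mul_exp_arg_mul_I x

theorem exists_norm_eq_one_sum_mul_eq_zero {ι : Type*} [Fintype ι] {a : ι → ℝ}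
    (hsum : ∑ i, a i = 1) (hhalf : ∀ i, a i ≤ 1 / 2) :
    ∃ W : ι → ℂ, (∀ i, ‖W i‖ = 1) ∧ ∑ i, a i * W i = 0 := by
  classical
  -- `A` is a heaviest set of weight at most `1 / 2`; adding any `j ∉ A` of positive weight
  -- pushes it over, so `A`, `{j}` and the rest each weigh at most `1 / 2`.
  obtain ⟨A, hA, hmax⟩ := exists_max_image {A : Finset ι | ∑ i ∈ A, a i ≤ 1 / 2}
    (fun A => ∑ i ∈ A, a i) ⟨∅, by simp⟩
  rw [mem_filter_univ] at hA
  obtain ⟨j, hjA, hj⟩ : ∃ j ∈ Aᶜ, (0 : ℝ) < a j :=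
    exists_lt_of_sum_lt (by rw [sum_const_zero]; linarith [sum_add_sum_compl A a])
  rw [mem_compl] at hjA
  have hover : 1 / 2 < ∑ i ∈ insert j A, a i := by
    by_contra! h
    have := hmax _ ((mem_filter_univ _).2 h)
    rw [sum_insert hjA] at this
    linarith
  set B := (insert j A)ᶜ
  have hB : ∑ i ∈ insert j A, a i + ∑ i ∈ B, a i = 1 := (sum_add_sum_compl _ _).trans hsum
  rw [sum_insert hjA] at hover hB
  obtain ⟨y, z, hy, hz, hyz⟩ := exists_norm_eq_one_add_mul_add_mul_eq_zero
    (u := ∑ i ∈ A, a i) (v := a j) (w := ∑ i ∈ B, a i)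
    (abs_sub_le_iff.2 ⟨by linarith, by linarith [hhalf j]⟩)
    (by rw [abs_of_nonneg (by linarith)]; linarith)
  set W : ι → ℂ := fun i => if i ∈ A then 1 else if i = j then y else z
  have hWA : ∑ i ∈ A, (a i : ℂ) * W i = ∑ i ∈ A, (a i : ℂ) :=
    sum_congr rfl fun i hi => by simp [W, hi]
  have hWB : ∑ i ∈ B, (a i : ℂ) * W i = (∑ i ∈ B, (a i : ℂ)) * z := by
    rw [sum_mul]
    refine sum_congr rfl fun i hi => ?_
    rw [mem_compl, mem_insert, not_or] at hi
    simp [W, hi]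
  refine ⟨W, fun i => ?_, ?_⟩
  · simp only [W]
    split_ifs <;> simp [hy, hz]
  · rw [← sum_add_sum_compl (insert j A), sum_insert hjA, hWA, hWB, ← hyz]
    simp only [W, if_neg hjA]
    push_cast
    ring

theorem norm_integral_exp_ofReal_mul_I_le {ν : ℝ} (hν : ν ≠ 0) (T : ℝ) :
    ‖∫ t in (0 : ℝ)..T, cexp (ν * t * I)‖ ≤ 2 / |ν| := by
  have hc : (ν : ℂ) * I ≠ 0 := mul_ne_zero (ofReal_ne_zero.2 hν) I_ne_zero
  simp_rw [mul_right_comm _ _ I]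
  rw [integral_exp_mul_complex hc, ofReal_zero, mul_zero, exp_zero, norm_div, norm_mul, norm_I,
    mul_one, norm_real, Real.norm_eq_abs]
  gcongr
  calc ‖cexp (ν * I * T) - 1‖ ≤ ‖cexp (↑(ν * T) * I)‖ + ‖(1 : ℂ)‖ := by
        rw [ofReal_mul, mul_right_comm]; exact norm_sub_le _ _
    _ = 2 := by rw [norm_exp_ofReal_mul_I, norm_one]; norm_num

theorem norm_integral_sum_mul_exp_le {α : Type*} (s : Finset α) (c : α → ℂ) {ν : α → ℝ}
    (hν : ∀ p ∈ s, ν p ≠ 0) (T : ℝ) :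
    ‖∫ t in (0 : ℝ)..T, ∑ p ∈ s, c p * cexp (ν p * t * I)‖ ≤ ∑ p ∈ s, ‖c p‖ * (2 / |ν p|) := by
  rw [intervalIntegral.integral_finsetSum fun p _ =>
    (by fun_prop : Continuous _).intervalIntegrable _ _]
  refine (norm_sum_le _ _).trans (sum_le_sum fun p hp => ?_)
  rw [intervalIntegral.integral_const_mul, norm_mul]
  gcongr
  exact norm_integral_exp_ofReal_mul_I_le (hν p hp) T

theorem exists_lt_of_ofReal_eq_add_sum_mul_exp {α : Type*} {f : ℝ → ℝ} {q r : ℝ}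
    (s : Finset α) (c : α → ℂ) {ν : α → ℝ} (hν : ∀ p ∈ s, ν p ≠ 0)
    (hf : ∀ t, (f t : ℂ) = q + ∑ p ∈ s, c p * cexp (ν p * t * I)) (hr : r < q) :
    ∃ t, r < f t := by
  by_contra! hle
  set g : ℝ → ℂ := fun t => ∑ p ∈ s, c p * cexp (ν p * t * I)
  set M := ∑ p ∈ s, ‖c p‖ * (2 / |ν p|)
  have hM : 0 ≤ M := (norm_nonneg _).trans (norm_integral_sum_mul_exp_le s c hν 0)
  have hg : Continuous g := by fun_prop
  have hfc : Continuous f := by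
    rw [show f = fun t => (q + g t).re from funext fun t => by rw [← hf, ofReal_re]]
    fun_prop
  set T := (M + 1) / (q - r)
  have hT : 0 ≤ T := div_nonneg (by linarith) (by linarith)
  have hupper : ∫ t in (0 : ℝ)..T, f t ≤ r * T := by
    have := intervalIntegral.integral_mono_on (μ := MeasureTheory.volume) hT
      (hfc.intervalIntegrable _ _) intervalIntegrable_const fun t _ => hle t
    simpa [mul_comm] using this
  have hlower : q * T - M ≤ ∫ t in (0 : ℝ)..T, f t := by
    have hint : (∫ t in (0 : ℝ)..T, f t) = q * T + (∫ t in (0 : ℝ)..T, g t).re := by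
      rw [← ofReal_re (∫ t in (0 : ℝ)..T, f t), ← intervalIntegral.integral_ofReal]
      simp_rw [hf]
      rw [intervalIntegral.integral_add intervalIntegrable_const (hg.intervalIntegrable _ _)]
      simp [mul_comm]
    rw [hint]
    linarith [neg_abs_le (∫ t in (0 : ℝ)..T, g t).re, abs_re_le_norm (∫ t in (0 : ℝ)..T, g t),
      norm_integral_sum_mul_exp_le s c hν T]
  have : (q - r) * T = M + 1 := mul_div_cancel₀ _ (sub_pos.2 hr).ne'
  linarith

theorem ofReal_norm_sum_mul_exp_sq {α : Type*} [DecidableEq α] (s : Finset α) (b : α → ℂ)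
    (ν : α → ℝ) (t : ℝ) :
    ((‖∑ p ∈ s, b p * cexp (ν p * t * I)‖ ^ 2 : ℝ) : ℂ) = (∑ p ∈ s, ‖b p‖ ^ 2 : ℝ) +
      ∑ p ∈ s.offDiag, b p.1 * conj (b p.2) * cexp ((ν p.1 - ν p.2 : ℝ) * t * I) := by
  have hconj : ∀ p, conj (b p * cexp (ν p * t * I)) = conj (b p) * cexp (-(ν p * t * I)) := by
    intro p
    rw [map_mul, ← exp_conj]
    simp
  have hterm : ∀ p p', b p * cexp (ν p * t * I) * conj (b p' * cexp (ν p' * t * I)) =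
      b p * conj (b p') * cexp ((ν p - ν p' : ℝ) * t * I) := by
    intro p p'
    rw [hconj, mul_mul_mul_comm, ← exp_add]
    push_cast
    ring_nf
  rw [ofReal_pow, ← mul_conj', map_sum, sum_mul_sum, ← sum_product', ← diag_union_offDiag,
    sum_union (disjoint_diag_offDiag s)]
  simp only [hterm]
  congr 1
  simp [diag, mul_conj']

theorem exists_lt_norm_sum_mul_exp_sq {α : Type*} (s : Finset α) (b : α → ℂ) {ν : α → ℝ}
    (hν : Set.InjOn ν s) {r : ℝ} (hr : r < ∑ p ∈ s, ‖b p‖ ^ 2) :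
    ∃ t : ℝ, r < ‖∑ p ∈ s, b p * cexp (ν p * t * I)‖ ^ 2 := by
  classical
  refine exists_lt_of_ofReal_eq_add_sum_mul_exp s.offDiag _ (ν := fun p => ν p.1 - ν p.2)
    (fun p hp => ?_) (ofReal_norm_sum_mul_exp_sq s b ν) hr
  obtain ⟨hp₁, hp₂, hne⟩ := mem_offDiag.1 hp
  exact sub_ne_zero.2 fun h => hne (hν hp₁ hp₂ h)

theorem exists_add_one_pow_mul_pow_lt_one (K : ℕ) {θ : ℝ} (h₀ : 0 < θ) (h₁ : θ < 1) :
    ∃ m : ℕ, ((m : ℝ) + 1) ^ K * θ ^ m < 1 := by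
  have h := (tendsto_pow_const_mul_const_pow_of_abs_lt_one K (abs_lt.2 ⟨by linarith, h₁⟩)).comp
    (tendsto_add_atTop_nat 1)
  obtain ⟨m, hm⟩ := (h.eventually (gt_mem_nhds h₀)).exists
  refine ⟨m, lt_of_mul_lt_mul_right ?_ h₀.le⟩
  simpa [pow_succ, mul_assoc] using hm

theorem inv_add_one_le_sum_choose_div_two_pow_sq (m : ℕ) :
    ((m : ℝ) + 1)⁻¹ ≤ ∑ j ∈ range (m + 1), ((m.choose j : ℝ) / 2 ^ m) ^ 2 := by
  have hsum : ∑ j ∈ range (m + 1), (m.choose j : ℝ) / 2 ^ m = 1 := by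
    rw [← sum_div, ← Nat.cast_sum, Nat.sum_range_choose]; push_cast; exact div_self (by positivity)
  have := sq_sum_le_card_mul_sum_sq (s := range (m + 1)) (f := fun j => (m.choose j : ℝ) / 2 ^ m)
  rw [hsum, card_range] at this
  rw [inv_le_iff_one_le_mul₀ (by positivity)]
  push_cast at this
  linarith

theorem LinearIndependent.injective_sum_natCast_mul {ι : Type*} [Fintype ι] {ω : ι → ℝ}
    (hω : LinearIndependent ℚ ω) : Function.Injective fun f : ι → ℕ => ∑ i, (f i : ℝ) * ω i := by
  intro f g hfg
  have := Fintype.linearIndependent_iff.1 hω (fun i => (f i : ℚ) - g i) <| by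
    simp only [Rat.smul_def, Rat.cast_sub, Rat.cast_natCast, sub_mul, sum_sub_distrib]
    exact sub_eq_zero.2 hfg
  funext i
  exact_mod_cast sub_eq_zero.1 (this i)

theorem prod_one_add_mul_exp_div_two_pow {ι : Type*} [Fintype ι] [DecidableEq ι] (m : ℕ)
    (w : ι → ℂ) (ω : ι → ℝ) (t : ℝ) :
    ∏ i, ((1 + w i * cexp (ω i * t * I)) / 2) ^ m =
      ∑ f ∈ Fintype.piFinset fun _ => range (m + 1),
        (∏ i, ((m.choose (f i) / 2 ^ m : ℝ) : ℂ) * w i ^ f i) *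
          cexp ((∑ i, (f i : ℝ) * ω i : ℝ) * t * I) := by
  have hfactor : ∀ i, ((1 + w i * cexp (ω i * t * I)) / 2) ^ m = ∑ j ∈ range (m + 1),
      ((m.choose j / 2 ^ m : ℝ) : ℂ) * w i ^ j * cexp ((j * ω i : ℝ) * t * I) := by
    intro i
    rw [div_pow, add_comm, add_pow, sum_div]
    refine sum_congr rfl fun j _ => ?_
    rw [mul_pow, ← exp_nat_mul]
    push_cast
    ring_nf
  simp_rw [hfactor, prod_univ_sum, prod_mul_distrib, ← exp_sum]
  push_cast
  simp_rw [sum_mul]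

theorem prod_le_of_forall_mem_Icc {ι : Type*} [Fintype ι] {x : ι → ℝ}
    (hx : ∀ i, x i ∈ Set.Icc 0 1) (i : ι) : ∏ j, x j ≤ x i := by
  classical
  rw [← mul_prod_erase univ x (mem_univ i)]
  exact mul_le_of_le_one_right (hx i).1 (prod_le_one (fun j _ => (hx j).1) fun j _ => (hx j).2)

theorem norm_sub_one_sq_of_norm_eq_one {u : ℂ} (hu : ‖u‖ = 1) :
    ‖u - 1‖ ^ 2 = 4 * (1 - ‖(1 + u) / 2‖ ^ 2) := by
  have := parallelogram_law_with_norm ℝ (1 : ℂ) u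
  rw [norm_one, hu, norm_sub_rev] at this
  rw [norm_div, RCLike.norm_ofNat]
  linarith

theorem LinearIndependent.exists_forall_norm_exp_sub_lt {ι : Type*} [Fintype ι] {ω : ι → ℝ}
    (hω : LinearIndependent ℚ ω) {z : ι → ℂ} (hz : ∀ i, ‖z i‖ = 1) {ε : ℝ} (hε : 0 < ε) :
    ∃ t : ℝ, ∀ i, ‖cexp (ω i * t * I) - z i‖ < ε := by
  classical
  set θ : ℝ := max (1 - ε ^ 2 / 4) (1 / 2)
  have hθ₀ : 0 < θ := lt_max_of_lt_right (by norm_num)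
  have hθ₁ : θ < 1 := max_lt (by linarith [pow_pos hε 2]) (by norm_num)
  obtain ⟨m, hm⟩ := exists_add_one_pow_mul_pow_lt_one (Fintype.card ι) hθ₀ hθ₁
  have hmean : θ ^ m < ∑ f ∈ Fintype.piFinset fun _ => range (m + 1),
      ‖∏ i, ((m.choose (f i) / 2 ^ m : ℝ) : ℂ) * conj (z i) ^ f i‖ ^ 2 := by
    simp only [norm_prod, norm_mul, norm_pow, RCLike.norm_conj, hz, one_pow, mul_one, norm_real,
      Real.norm_eq_abs, sq_abs, ← prod_pow]
    rw [sum_prod_piFinset (range (m + 1)) fun _ j => ((m.choose j : ℝ) / 2 ^ m) ^ 2, prod_const,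
      card_univ]
    calc θ ^ m < (((m : ℝ) + 1) ^ Fintype.card ι)⁻¹ := by
          rw [← one_div, lt_div_iff₀ (by positivity), mul_comm]
          exact hm
      _ = ((m : ℝ) + 1)⁻¹ ^ Fintype.card ι := (inv_pow _ _).symm
      _ ≤ _ := pow_le_pow_left₀ (by positivity) (inv_add_one_le_sum_choose_div_two_pow_sq m) _
  obtain ⟨t, ht⟩ := exists_lt_norm_sum_mul_exp_sq _ _
    hω.injective_sum_natCast_mul.injOn hmean
  rw [← prod_one_add_mul_exp_div_two_pow] at ht
  refine ⟨t, fun i => ?_⟩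
  set u : ι → ℂ := fun i => conj (z i) * cexp (ω i * t * I)
  have hu : ∀ i, ‖u i‖ = 1 := fun i => by
    rw [norm_mul, RCLike.norm_conj, hz, ← ofReal_mul, norm_exp_ofReal_mul_I, one_mul]
  have hclose : θ < ‖(1 + u i) / 2‖ ^ 2 := by
    refine lt_of_pow_lt_pow_left₀ m (by positivity) (ht.trans_le ?_)
    have hx : ∀ j, (‖(1 + u j) / 2‖ ^ 2) ^ m ∈ Set.Icc (0 : ℝ) 1 := fun j => by
      have : ‖(1 + u j) / 2‖ ≤ 1 := by
        rw [norm_div, RCLike.norm_ofNat, div_le_one two_pos]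
        exact (norm_add_le _ _).trans (by rw [norm_one, hu]; norm_num)
      exact ⟨by positivity, pow_le_one₀ (by positivity) (pow_le_one₀ (norm_nonneg _) this)⟩
    simpa only [norm_prod, ← prod_pow, norm_pow, ← pow_mul, mul_comm m 2] using
      prod_le_of_forall_mem_Icc hx i
  have hdist : ‖cexp (ω i * t * I) - z i‖ = ‖u i - 1‖ := by
    have : z i * conj (z i) = 1 := by rw [mul_conj', hz, ofReal_one, one_pow]
    rw [show u i - 1 = conj (z i) * (cexp (ω i * t * I) - z i) by linear_combination this,
      norm_mul, RCLike.norm_conj, hz, one_mul]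
  rw [hdist, ← sq_lt_sq₀ (norm_nonneg _) hε.le, norm_sub_one_sq_of_norm_eq_one (hu i)]
  linarith [le_max_left (1 - ε ^ 2 / 4) (1 / 2)]

theorem exists_forall_norm_exp_sub_mul_lt {ι : Type*} [Fintype ι] {E : ι → ℝ} {i₀ : ι}
    (hE : LinearIndependent ℚ fun i : {i // i ≠ i₀} => E i - E i₀) {z : ι → ℂ}
    (hz : ∀ i, ‖z i‖ = 1) {ε : ℝ} (hε : 0 < ε) :
    ∃ t : ℝ, ∃ c : ℂ, ∀ i, ‖cexp (E i * t * I) - c * z i‖ < ε := by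
  classical
  have hz₀ : z i₀ ≠ 0 := norm_ne_zero_iff.1 (by rw [hz]; exact one_ne_zero)
  obtain ⟨t, ht⟩ := hE.exists_forall_norm_exp_sub_lt (z := fun i => z i / z i₀)
    (fun i => by rw [norm_div, hz, hz, div_one]) hε
  refine ⟨t, cexp (E i₀ * t * I) / z i₀, fun i => ?_⟩
  by_cases hi : i = i₀
  · subst hi
    rwa [div_mul_cancel₀ _ hz₀, sub_self, norm_zero]
  · have hsplit : cexp (E i * t * I) - cexp (E i₀ * t * I) / z i₀ * z i =
        cexp (E i₀ * t * I) * (cexp ((E i - E i₀ : ℝ) * t * I) - z i / z i₀) := by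
      rw [mul_sub, ← exp_add]
      push_cast
      ring_nf
    rw [hsplit, norm_mul, ← ofReal_mul, norm_exp_ofReal_mul_I, one_mul]
    exact ht ⟨i, hi⟩

/-- The amplitude condition together with phase ergodicity (rationally independent
gaps) drives the Loschmidt return amplitude arbitrarily close to zero. -/
theorem return_amplitude_near_zero
    (N : ℕ) (hN : 2 ≤ N) (a : Fin N → ℝ)
    (ha : ∀ n, 0 ≤ a n) (hsum : ∑ n, a n = 1) (hhalf : ∀ n, a n ≤ 1 / 2)
    (E : Fin N → ℝ)
    (hindep : LinearIndependent ℚ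
      (fun n : {n : Fin N // n ≠ ⟨0, by omega⟩} => E n.1 - E ⟨0, by omega⟩)) :
    ∀ ε > 0, ∃ t : ℝ,
      ‖∑ n, (a n : ℂ) * Complex.exp (-Complex.I * (E n : ℂ) * (t : ℂ))‖ < ε := by
  intro ε hε
  obtain ⟨W, hW, hsumW⟩ := exists_norm_eq_one_sum_mul_eq_zero hsum hhalf
  obtain ⟨t, c, ht⟩ := exists_forall_norm_exp_sub_mul_lt hindep hW (half_pos hε)
  have hG : ∑ n, (a n : ℂ) * (cexp (E n * t * I) - c * W n) =
      ∑ n, (a n : ℂ) * cexp (-I * E n * ↑(-t)) := by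
    simp_rw [mul_sub, sum_sub_distrib, mul_left_comm _ c, ← mul_sum, hsumW, mul_zero, sub_zero]
    refine sum_congr rfl fun n _ => ?_
    push_cast
    ring_nf
  refine ⟨-t, ?_⟩
  calc ‖∑ n, (a n : ℂ) * cexp (-I * E n * ↑(-t))‖
      ≤ ∑ n, a n * (ε / 2) := by
        rw [← hG]
        refine (norm_sum_le _ _).trans (sum_le_sum fun n _ => ?_)
        rw [norm_mul, norm_real, Real.norm_of_nonneg (ha n)]
        exact mul_le_mul_of_nonneg_left (ht n).le (ha n)
    _ = ε / 2 := by rw [← sum_mul, hsum, one_mul]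
    _ < ε := half_lt_self hε
end
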